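/- arXiv:1710.06938 — 6 statements merged into one kernel-verified Lean document; each statement's English description precedes it below -/
import Mathlib

section
/- Let E be a finite-dimensional real normed vector space and Ω ⊆ E a nonempty bounded open convex set. For any two distinct points x, y ∈ Ω, the affine line through x and y meets the frontier ∂Ω of Ω in exactly two points; moreover these can be labeled a and b so that x lies in the open segment between a and y, and y lies in the open segment between x and b. -/
/-!
Parametrize the line through `x` and `y` affinely by `t ↦ x + t • (y - x)`. The parameters landing
in `Ω` form a bounded open interval `(α, β)` containing `0` and `1`. Because `Ω` is convex and the
line passes through an interior point, the parametrization pulls `frontier Ω` back to exactly the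
frontier `{α, β}` of that interval: a frontier point `c` of `Ω` on the line is the limit of the open
segment from `x` to `c`, which lies in `Ω`.
-/

open Set AffineMap Bornology

theorem IsOpen.eq_Ioo_csInf_csSup {α : Type*} [ConditionallyCompleteLinearOrder α]
    [TopologicalSpace α] [OrderTopology α] [DenselyOrdered α] [NoMinOrder α] [NoMaxOrder α]
    {s : Set α} (ho : IsOpen s) (hc : IsConnected s) (hb : BddBelow s) (ha : BddAbove s) :
    s = Ioo (sInf s) (sSup s) :=
  (ho.subset_interior_iff.2 (subset_Icc_csInf_csSup hb ha)).trans interior_Icc.subset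
    |>.antisymm (hc.Ioo_csInf_csSup_subset hb ha)

theorem Bornology.IsBounded.preimage_lineMap {V P : Type*} [NormedAddCommGroup V]
    [NormedSpace ℝ V] [MetricSpace P] [NormedAddTorsor V P] {s : Set P} (hs : IsBounded s)
    {x y : P} (hxy : x ≠ y) : IsBounded (lineMap x y ⁻¹' s : Set ℝ) := by
  obtain ⟨r, hr⟩ := hs.subset_closedBall x
  refine (Metric.isBounded_closedBall (x := (0 : ℝ)) (r := r / dist x y)).subset fun t ht ↦ ?_
  have hdist : ‖t‖ * dist x y ≤ r := dist_lineMap_left x y t ▸ hr ht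
  rw [mem_closedBall_zero_iff, le_div_iff₀ (dist_pos.2 hxy)]
  exact hdist

section Convex

variable {E F : Type*} [AddCommGroup E] [Module ℝ E] [TopologicalSpace E]
  [IsTopologicalAddGroup E] [ContinuousConstSMul ℝ E]
  [AddCommGroup F] [Module ℝ F] [TopologicalSpace F] [ContinuousAdd F] [ContinuousSMul ℝ F]

theorem Convex.preimage_closure_subset_closure_preimage_interior {Ω : Set E} (hΩ : Convex ℝ Ω)
    (g : F →ᵃ[ℝ] E) {p : F} (hp : g p ∈ interior Ω) :
    g ⁻¹' closure Ω ⊆ closure (g ⁻¹' interior Ω) := fun q hq ↦ by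
  have hseg : openSegment ℝ p q ⊆ g ⁻¹' interior Ω := by
    rw [← image_subset_iff, image_openSegment]
    exact hΩ.openSegment_interior_closure_subset_interior hp hq
  exact closure_mono hseg (segment_subset_closure_openSegment (right_mem_segment ℝ p q))

theorem IsOpen.preimage_frontier_eq_frontier_preimage_of_convex {Ω : Set E} (hΩ : IsOpen Ω)
    (hconv : Convex ℝ Ω) {g : F →ᵃ[ℝ] E} (hg : Continuous g) {p : F} (hp : g p ∈ Ω) :
    g ⁻¹' frontier Ω = frontier (g ⁻¹' Ω) := by
  have hclosure : g ⁻¹' closure Ω = closure (g ⁻¹' Ω) := by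
    refine subset_antisymm ?_ (hg.closure_preimage_subset Ω)
    simpa only [hΩ.interior_eq] using
      hconv.preimage_closure_subset_closure_preimage_interior g (hΩ.interior_eq.symm ▸ hp)
  rw [hΩ.frontier_eq, (hΩ.preimage hg).frontier_eq, preimage_sdiff, hclosure]

end Convex

theorem line_meets_frontier_in_exactly_two_points_general
    {E : Type*} [NormedAddCommGroup E] [NormedSpace ℝ E]
    (Ω : Set E) (hbdd : Bornology.IsBounded Ω)
    (hop : IsOpen Ω) (hconv : Convex ℝ Ω)
    {x y : E} (hx : x ∈ Ω) (hy : y ∈ Ω) (hxy : x ≠ y) :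
    ∃ a b : E, a ≠ b ∧ a ∈ frontier Ω ∧ b ∈ frontier Ω ∧
      a ∈ affineSpan ℝ ({x, y} : Set E) ∧ b ∈ affineSpan ℝ ({x, y} : Set E) ∧
      x ∈ openSegment ℝ a y ∧ y ∈ openSegment ℝ x b ∧
      ∀ c ∈ frontier Ω, c ∈ affineSpan ℝ ({x, y} : Set E) → c = a ∨ c = b := by
  set f : ℝ →ᵃ[ℝ] E := lineMap x y
  set S := f ⁻¹' Ω
  have hS0 : (0 : ℝ) ∈ S := by simpa [S, f] using hx
  have hS1 : (1 : ℝ) ∈ S := by simpa [S, f] using hy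
  have hSbdd := hbdd.preimage_lineMap hxy
  have hS : S = Ioo (sInf S) (sSup S) :=
    (hop.preimage lineMap_continuous).eq_Ioo_csInf_csSup
      ⟨⟨0, hS0⟩, (hconv.affine_preimage f).isPreconnected⟩ hSbdd.bddBelow hSbdd.bddAbove
  set α := sInf S
  set β := sSup S
  have h0 : (0 : ℝ) ∈ Ioo α β := hS ▸ hS0
  have h1 : (1 : ℝ) ∈ Ioo α β := hS ▸ hS1
  have hfr : f ⁻¹' frontier Ω = {α, β} := by
    rw [hop.preimage_frontier_eq_frontier_preimage_of_convex hconv lineMap_continuous hS0]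
    change frontier S = _
    rw [hS, frontier_Ioo (h0.1.trans h0.2)]
  have hαβ : f α ≠ f β := (lineMap_injective ℝ hxy).ne (h0.1.trans h0.2).ne
  refine ⟨f α, f β, hαβ, hfr.ge (by simp), hfr.ge (by simp), lineMap_mem_affineSpan_pair _ _ _,
    lineMap_mem_affineSpan_pair _ _ _, ?_, ?_, ?_⟩
  · have h : (0 : ℝ) ∈ openSegment ℝ α 1 := by
      rw [openSegment_eq_Ioo (h0.1.trans one_pos)]; exact ⟨h0.1, one_pos⟩
    simpa [f] using mem_image_of_mem f h
  · have h : (1 : ℝ) ∈ openSegment ℝ 0 β := by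
      rw [openSegment_eq_Ioo h0.2]; exact ⟨one_pos, h1.2⟩
    simpa [f] using mem_image_of_mem f h
  · intro c hc hcL
    obtain ⟨s, rfl⟩ := mem_affineSpan_pair_iff_exists_lineMap_eq.1 hcL
    have hs : s ∈ ({α, β} : Set ℝ) := hfr ▸ hc
    rcases hs with rfl | rfl
    exacts [Or.inl rfl, Or.inr rfl]

/-- For a nonempty bounded open convex set `Ω` in a finite-dimensional real normed
vector space, the affine line through two distinct points `x, y ∈ Ω` meets the
frontier of `Ω` in exactly two points `a, b`, labeled so that `x` lies in the open
segment between `a` and `y`, and `y` lies in the open segment between `x` and `b`. -/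
theorem line_meets_frontier_in_exactly_two_points
    {E : Type*} [NormedAddCommGroup E] [NormedSpace ℝ E] [FiniteDimensional ℝ E]
    (Ω : Set E) (hne : Ω.Nonempty) (hbdd : Bornology.IsBounded Ω)
    (hop : IsOpen Ω) (hconv : Convex ℝ Ω)
    {x y : E} (hx : x ∈ Ω) (hy : y ∈ Ω) (hxy : x ≠ y) :
    ∃ a b : E, a ≠ b ∧ a ∈ frontier Ω ∧ b ∈ frontier Ω ∧
      a ∈ affineSpan ℝ ({x, y} : Set E) ∧ b ∈ affineSpan ℝ ({x, y} : Set E) ∧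
      x ∈ openSegment ℝ a y ∧ y ∈ openSegment ℝ x b ∧
      ∀ c ∈ frontier Ω, c ∈ affineSpan ℝ ({x, y} : Set E) → c = a ∨ c = b :=
  line_meets_frontier_in_exactly_two_points_general Ω hbdd hop hconv hx hy hxy
end

section
/- The Hilbert distance d_Ω is a metric on Ω: d_Ω(x,y) ≥ 0 with equality if and only if x = y, d_Ω(x,y) = d_Ω(y,x), and d_Ω(x,z) ≤ d_Ω(x,y) + d_Ω(y,z) for all x, y, z ∈ Ω. -/
/-!
For `x ≠ y` let `b` be the point where the ray from `x` through `y` leaves `Ω`; the Funk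
distance is `F(x, y) = log (‖b - x‖ / ‖b - y‖)`, and `d_Ω(x, y) = (F(x, y) + F(y, x)) / 2`.
If `f` is a continuous linear functional with `f < f b` on `Ω` (it exists by Hahn–Banach), the
ratio `(f b - f u) / (f b - f w)` equals `‖b - u‖ / ‖b - w‖` when `b` is also the exit point
from `u` through `w`, and bounds the corresponding ratio for any other exit point from below.
Hence `F(x, z) ≤ F(x, y) + F(y, z)`, and the triangle inequality for `d_Ω` follows by
symmetrization. Symmetry itself comes from uniqueness of exit points, and positivity from
`‖b - y‖ < ‖b - x‖`.
-/

open Set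

/-- The defining property of the Hilbert distance on a convex domain `Ω`:
`dΩ x x = 0`, and for distinct `x, y ∈ Ω` the line through `x` and `y` meets
`frontier Ω` in two points `a, b`, labeled so that `x` lies between `a` and `y`
and `y` lies between `x` and `b`, and
`dΩ x y = (1/2) · log((‖a−y‖·‖b−x‖)/(‖a−x‖·‖b−y‖))`. -/
def IsHilbertDist {E : Type*} [NormedAddCommGroup E] [NormedSpace ℝ E]
    (Ω : Set E) (dΩ : E → E → ℝ) : Prop :=
  (∀ x, dΩ x x = 0) ∧
  ∀ x ∈ Ω, ∀ y ∈ Ω, x ≠ y →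
    ∃ a b : E, a ∈ frontier Ω ∧ b ∈ frontier Ω ∧
      x ∈ openSegment ℝ a y ∧ y ∈ openSegment ℝ x b ∧
      dΩ x y = (1/2) * Real.log ((‖a - y‖ * ‖b - x‖) / (‖a - x‖ * ‖b - y‖))

section Segment

variable {E : Type*} [NormedAddCommGroup E]

theorem IsOpen.norm_sub_pos_of_mem_frontier {Ω : Set E} (hΩo : IsOpen Ω) {b x : E}
    (hb : b ∈ frontier Ω) (hx : x ∈ Ω) : 0 < ‖b - x‖ :=
  norm_pos_iff.2 <| sub_ne_zero.2 fun h => (hΩo.frontier_eq ▸ hb).2 (h ▸ hx)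

variable [NormedSpace ℝ E]

theorem sub_map_mul_norm_eq_of_mem_segment {x y b : E} (hy : y ∈ segment ℝ x b)
    (f : E →L[ℝ] ℝ) (c : ℝ) :
    (c - f y) * ‖b - x‖ = (c - f x) * ‖b - y‖ + (c - f b) * ‖y - x‖ := by
  obtain ⟨t, ⟨ht0, ht1⟩, rfl⟩ := segment_eq_image' ℝ x b ▸ hy
  have hby : b - (x + t • (b - x)) = (1 - t) • (b - x) := by module
  rw [hby, add_sub_cancel_left, norm_smul, norm_smul, Real.norm_of_nonneg ht0,
    Real.norm_of_nonneg (sub_nonneg.2 ht1), map_add, map_smul, map_sub, smul_eq_mul]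
  ring

noncomputable def funkDist (x y b : E) : ℝ := Real.log (‖b - x‖ / ‖b - y‖)

theorem funkDist_pos {x y b : E} (hy : y ∈ openSegment ℝ x b) (hxy : x ≠ y) :
    0 < funkDist x y b := by
  obtain ⟨t, ⟨ht0, ht1⟩, rfl⟩ := openSegment_eq_image' ℝ x b ▸ hy
  have hbx : 0 < ‖b - x‖ := norm_pos_iff.2 fun h => hxy (by simp [h])
  have hby : b - (x + t • (b - x)) = (1 - t) • (b - x) := by module
  rw [funkDist, hby, norm_smul, Real.norm_of_nonneg (sub_nonneg.2 ht1.le)]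
  refine Real.log_pos ((one_lt_div (by nlinarith)).2 ?_)
  nlinarith

theorem log_sub_log_le_funkDist {x y b : E} (hy : y ∈ openSegment ℝ x b)
    (f : E →L[ℝ] ℝ) {c : ℝ} (hx : f x < c) (hyc : f y < c) (hb : f b ≤ c) :
    Real.log (c - f x) - Real.log (c - f y) ≤ funkDist x y b := by
  rcases eq_or_ne y b with rfl | hyb
  · obtain rfl := right_mem_openSegment_iff.1 hy
    simp [funkDist]
  have hid := sub_map_mul_norm_eq_of_mem_segment (openSegment_subset_segment ℝ x b hy) f c
  have hbyp : 0 < ‖b - y‖ := norm_pos_iff.2 (sub_ne_zero.2 hyb.symm)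
  rw [← Real.log_div (sub_pos.2 hx).ne' (sub_pos.2 hyc).ne']
  refine Real.log_le_log (div_pos (sub_pos.2 hx) (sub_pos.2 hyc)) ?_
  rw [div_le_div_iff₀ (sub_pos.2 hyc) hbyp]
  nlinarith [mul_nonneg (sub_nonneg.2 hb) (norm_nonneg (y - x))]

theorem funkDist_eq_log_sub_log {x y b : E} (hy : y ∈ openSegment ℝ x b)
    (f : E →L[ℝ] ℝ) (hx : f x < f b) (hyb : f y < f b) :
    funkDist x y b = Real.log (f b - f x) - Real.log (f b - f y) := by
  have hid := sub_map_mul_norm_eq_of_mem_segment (openSegment_subset_segment ℝ x b hy) f (f b)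
  have hbyp : 0 < ‖b - y‖ := norm_pos_iff.2 (sub_ne_zero.2 fun h => hyb.ne (by rw [h]))
  rw [sub_self, zero_mul, add_zero] at hid
  rw [funkDist, ← Real.log_div (sub_pos.2 hx).ne' (sub_pos.2 hyb).ne']
  congr 1
  rw [div_eq_div_iff hbyp.ne' (sub_pos.2 hyb).ne']
  linarith

end Segment

namespace Convex

variable {E : Type*} [NormedAddCommGroup E] [NormedSpace ℝ E] {Ω : Set E}

theorem exists_forall_lt_of_mem_frontier (hΩ : Convex ℝ Ω) (hΩo : IsOpen Ω) {b : E}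
    (hb : b ∈ frontier Ω) :
    ∃ f : E →L[ℝ] ℝ, (∀ z ∈ Ω, f z < f b) ∧ ∀ z ∈ closure Ω, f z ≤ f b := by
  obtain ⟨f, hf⟩ := geometric_hahn_banach_open_point hΩ hΩo (hΩo.frontier_eq ▸ hb).2
  refine ⟨f, hf, fun z hz => ?_⟩
  exact closure_minimal (fun w hw => (hf w hw).le) (isClosed_Iic.preimage f.continuous) hz

theorem eq_of_mem_openSegment_of_mem_frontier (hΩ : Convex ℝ Ω) (hΩo : IsOpen Ω)
    {x y b b' : E} (hx : x ∈ Ω) (hb : b ∈ frontier Ω) (hb' : b' ∈ frontier Ω)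
    (hy : y ∈ openSegment ℝ x b) (hy' : y ∈ openSegment ℝ x b') : b = b' := by
  obtain ⟨v, ⟨hv0, hv1⟩, rfl⟩ := openSegment_eq_image' ℝ x b ▸ hy
  obtain ⟨w, ⟨hw0, hw1⟩, hvw⟩ := openSegment_eq_image' ℝ x b' ▸ hy'
  clear hy hy'
  wlog hle : v ≤ w generalizing b b' v w
  · exact (this hb' hb w hw0 hw1 v hvw.symm hv0 hv1 (le_of_not_ge hle)).symm
  have hb'x : b' = x + (v / w) • (b - x) := by
    have h : w • (b' - x) = v • (b - x) := add_left_cancel hvw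
    rw [div_eq_inv_mul, mul_smul, ← h, inv_smul_smul₀ hw0.ne', add_sub_cancel]
  -- a nearer exit point `b'` would lie in `openSegment ℝ x b ⊆ Ω`
  rcases hle.lt_or_eq with hlt | rfl
  · have hsub : openSegment ℝ x b ⊆ Ω := hΩo.interior_eq ▸
      hΩ.openSegment_interior_closure_subset_interior (hΩo.interior_eq.symm ▸ hx) hb.1
    have hmem : b' ∈ openSegment ℝ x b := openSegment_eq_image' ℝ x b ▸
      ⟨v / w, ⟨by positivity, (div_lt_one hw0).2 hlt⟩, hb'x.symm⟩
    exact absurd (hsub hmem) (hΩo.frontier_eq ▸ hb').2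
  · rw [hb'x, div_self hv0.ne', one_smul, add_sub_cancel]

theorem funkDist_le_add (hΩ : Convex ℝ Ω) (hΩo : IsOpen Ω) {x y z b e q : E}
    (hx : x ∈ Ω) (hy : y ∈ Ω) (hz : z ∈ Ω)
    (hb : b ∈ frontier Ω) (he : e ∈ closure Ω) (hq : q ∈ closure Ω)
    (hzb : z ∈ openSegment ℝ x b) (hye : y ∈ openSegment ℝ x e)
    (hzq : z ∈ openSegment ℝ y q) :
    funkDist x z b ≤ funkDist x y e + funkDist y z q := by
  obtain ⟨f, hfΩ, hfcl⟩ := hΩ.exists_forall_lt_of_mem_frontier hΩo hb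
  have hxz := funkDist_eq_log_sub_log hzb f (hfΩ x hx) (hfΩ z hz)
  have hxy := log_sub_log_le_funkDist hye f (hfΩ x hx) (hfΩ y hy) (hfcl e he)
  have hyz := log_sub_log_le_funkDist hzq f (hfΩ y hy) (hfΩ z hz) (hfcl q hq)
  linarith

end Convex

namespace IsHilbertDist

variable {E : Type*} [NormedAddCommGroup E] [NormedSpace ℝ E] {Ω : Set E} {dΩ : E → E → ℝ}

theorem eq_funkDist (hd : IsHilbertDist Ω dΩ) (hΩ : Convex ℝ Ω) (hΩo : IsOpen Ω)
    {x y a b : E} (hx : x ∈ Ω) (hy : y ∈ Ω) (hxy : x ≠ y)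
    (ha : a ∈ frontier Ω) (hb : b ∈ frontier Ω)
    (hxa : x ∈ openSegment ℝ a y) (hyb : y ∈ openSegment ℝ x b) :
    dΩ x y = (funkDist x y b + funkDist y x a) / 2 := by
  obtain ⟨a', b', ha', hb', hxa', hyb', hdxy⟩ := hd.2 x hx y hy hxy
  obtain rfl := hΩ.eq_of_mem_openSegment_of_mem_frontier hΩo hx hb hb' hyb hyb'
  obtain rfl := hΩ.eq_of_mem_openSegment_of_mem_frontier hΩo hy ha ha'
    (openSegment_symm ℝ a y ▸ hxa) (openSegment_symm ℝ a' y ▸ hxa')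
  have hbx := hΩo.norm_sub_pos_of_mem_frontier hb hx
  have hby := hΩo.norm_sub_pos_of_mem_frontier hb hy
  have hax := hΩo.norm_sub_pos_of_mem_frontier ha hx
  have hay := hΩo.norm_sub_pos_of_mem_frontier ha hy
  rw [hdxy, funkDist, funkDist, ← Real.log_mul (by positivity) (by positivity),
    div_mul_div_comm, mul_comm ‖b - x‖, mul_comm ‖b - y‖]
  ring

theorem pos_of_ne (hd : IsHilbertDist Ω dΩ) (hΩ : Convex ℝ Ω) (hΩo : IsOpen Ω) {x y : E}
    (hx : x ∈ Ω) (hy : y ∈ Ω) (hxy : x ≠ y) : 0 < dΩ x y := by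
  obtain ⟨a, b, ha, hb, hxa, hyb, -⟩ := hd.2 x hx y hy hxy
  rw [hd.eq_funkDist hΩ hΩo hx hy hxy ha hb hxa hyb]
  have := funkDist_pos hyb hxy
  have := funkDist_pos (openSegment_symm ℝ a y ▸ hxa) hxy.symm
  positivity

theorem nonneg (hd : IsHilbertDist Ω dΩ) (hΩ : Convex ℝ Ω) (hΩo : IsOpen Ω) {x y : E}
    (hx : x ∈ Ω) (hy : y ∈ Ω) : 0 ≤ dΩ x y := by
  rcases eq_or_ne x y with rfl | hxy
  · exact (hd.1 x).ge
  · exact (hd.pos_of_ne hΩ hΩo hx hy hxy).le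

theorem symm (hd : IsHilbertDist Ω dΩ) (hΩ : Convex ℝ Ω) (hΩo : IsOpen Ω) {x y : E}
    (hx : x ∈ Ω) (hy : y ∈ Ω) : dΩ x y = dΩ y x := by
  rcases eq_or_ne x y with rfl | hxy
  · rfl
  obtain ⟨a, b, ha, hb, hxa, hyb, -⟩ := hd.2 x hx y hy hxy
  rw [hd.eq_funkDist hΩ hΩo hx hy hxy ha hb hxa hyb,
    hd.eq_funkDist hΩ hΩo hy hx hxy.symm hb ha (openSegment_symm ℝ x b ▸ hyb)
      (openSegment_symm ℝ a y ▸ hxa), add_comm]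

theorem triangle (hd : IsHilbertDist Ω dΩ) (hΩ : Convex ℝ Ω) (hΩo : IsOpen Ω) {x y z : E}
    (hx : x ∈ Ω) (hy : y ∈ Ω) (hz : z ∈ Ω) : dΩ x z ≤ dΩ x y + dΩ y z := by
  rcases eq_or_ne x y with rfl | hxy
  · simp [hd.1]
  rcases eq_or_ne y z with rfl | hyz
  · simp [hd.1]
  rcases eq_or_ne x z with rfl | hxz
  · rw [hd.1]
    exact add_nonneg (hd.nonneg hΩ hΩo hx hy) (hd.nonneg hΩ hΩo hy hx)
  obtain ⟨a, b, ha, hb, hxa, hzb, -⟩ := hd.2 x hx z hz hxz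
  obtain ⟨c, e, hc, he, hxc, hye, -⟩ := hd.2 x hx y hy hxy
  obtain ⟨p, q, hp, hq, hyp, hzq, -⟩ := hd.2 y hy z hz hyz
  rw [hd.eq_funkDist hΩ hΩo hx hz hxz ha hb hxa hzb,
    hd.eq_funkDist hΩ hΩo hx hy hxy hc he hxc hye,
    hd.eq_funkDist hΩ hΩo hy hz hyz hp hq hyp hzq]
  have hxyz := hΩ.funkDist_le_add hΩo hx hy hz hb he.1 hq.1 hzb hye hzq
  have hzyx := hΩ.funkDist_le_add hΩo hz hy hx ha hp.1 hc.1 (openSegment_symm ℝ a z ▸ hxa)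
    (openSegment_symm ℝ p z ▸ hyp) (openSegment_symm ℝ c y ▸ hxc)
  linarith

end IsHilbertDist

theorem hilbert_dist_is_metric_general
    {E : Type*} [NormedAddCommGroup E] [NormedSpace ℝ E]
    (Ω : Set E)
    (hop : IsOpen Ω) (hconv : Convex ℝ Ω)
    (dΩ : E → E → ℝ) (hd : IsHilbertDist Ω dΩ) :
    (∀ x ∈ Ω, ∀ y ∈ Ω, 0 ≤ dΩ x y ∧ (dΩ x y = 0 ↔ x = y)) ∧
    (∀ x ∈ Ω, ∀ y ∈ Ω, dΩ x y = dΩ y x) ∧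
    (∀ x ∈ Ω, ∀ y ∈ Ω, ∀ z ∈ Ω, dΩ x z ≤ dΩ x y + dΩ y z) := by
  refine ⟨fun x hx y hy => ⟨hd.nonneg hconv hop hx hy, fun h0 => ?_, fun h => h ▸ hd.1 x⟩,
    fun x hx y hy => hd.symm hconv hop hx hy,
    fun x hx y hy z hz => hd.triangle hconv hop hx hy hz⟩
  by_contra hxy
  exact (hd.pos_of_ne hconv hop hx hy hxy).ne' h0

/-- The Hilbert distance is a metric on `Ω`: nonnegative, vanishing exactly on the
diagonal, symmetric, and satisfying the triangle inequality. -/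
theorem hilbert_dist_is_metric
    {E : Type*} [NormedAddCommGroup E] [NormedSpace ℝ E] [FiniteDimensional ℝ E]
    (Ω : Set E) (hne : Ω.Nonempty) (hbdd : Bornology.IsBounded Ω)
    (hop : IsOpen Ω) (hconv : Convex ℝ Ω)
    (dΩ : E → E → ℝ) (hd : IsHilbertDist Ω dΩ) :
    (∀ x ∈ Ω, ∀ y ∈ Ω, 0 ≤ dΩ x y ∧ (dΩ x y = 0 ↔ x = y)) ∧
    (∀ x ∈ Ω, ∀ y ∈ Ω, dΩ x y = dΩ y x) ∧
    (∀ x ∈ Ω, ∀ y ∈ Ω, ∀ z ∈ Ω, dΩ x z ≤ dΩ x y + dΩ y z) :=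
  hilbert_dist_is_metric_general Ω hop hconv dΩ hd
end

section
/- Affine segments are geodesics for the Hilbert metric: if x, y, z ∈ Ω are collinear and y lies in the closed segment from x to z, then d_Ω(x,z) = d_Ω(x,y) + d_Ω(y,z). -/
open Set

/-! In a convex set, a point strictly between an interior point and a point of the closure is
interior, so a ray from an interior point meets the frontier at most once. Hence the Hilbert
endpoints of the pairs `(x, z)`, `(x, y)` and `(y, z)` coincide, and with common endpoints the
factors at `y` cancel in the product of the cross ratios of `(x, y)` and `(y, z)`, leaving the
cross ratio of `(x, z)`. -/

theorem wbtw_total_of_wbtw_of_wbtw {R V P : Type*} [Field R] [LinearOrder R]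
    [IsStrictOrderedRing R] [AddCommGroup V] [Module R V] [AddTorsor V P] {w p a a' : P}
    (hwp : w ≠ p) (ha : Wbtw R w p a) (ha' : Wbtw R w p a') : Wbtw R p a a' ∨ Wbtw R p a' a :=
  wbtw_total_of_sameRay_vsub_left <|
    ha.sameRay_vsub.symm.trans ha'.sameRay_vsub fun h => absurd (vsub_eq_zero_iff_eq.1 h) hwp.symm

theorem Wbtw.of_mem_openSegment {R V : Type*} [Ring R] [PartialOrder R] [IsOrderedRing R]
    [AddCommGroup V] [Module R V] {x y z : V} (h : y ∈ openSegment R x z) : Wbtw R x y z :=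
  mem_segment_iff_wbtw.1 (openSegment_subset_segment R x z h)

section Ray

variable {E : Type*} [AddCommGroup E] [Module ℝ E] [TopologicalSpace E] [IsTopologicalAddGroup E]
  [ContinuousConstSMul ℝ E]

theorem Convex.eq_of_wbtw_of_notMem_interior {Ω : Set E} (hconv : Convex ℝ Ω) {p a a' : E}
    (hp : p ∈ interior Ω) (ha : a ∉ interior Ω) (ha' : a' ∈ closure Ω) (h : Wbtw ℝ p a a') :
    a = a' := by
  by_contra hne
  have hpa : p ≠ a := fun hpa => ha (hpa ▸ hp)
  exact ha <| hconv.openSegment_interior_closure_subset_interior hp ha' <|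
    mem_openSegment_of_ne_left_right hpa (Ne.symm hne) (mem_segment_iff_wbtw.2 h)

theorem Convex.eq_of_wbtw_of_mem_frontier {Ω : Set E} (hconv : Convex ℝ Ω) {w p a a' : E}
    (hp : p ∈ interior Ω) (hwp : w ≠ p) (ha : a ∈ frontier Ω) (ha' : a' ∈ frontier Ω)
    (hwa : Wbtw ℝ w p a) (hwa' : Wbtw ℝ w p a') : a = a' := by
  rcases wbtw_total_of_wbtw_of_wbtw hwp hwa hwa' with h | h
  · exact hconv.eq_of_wbtw_of_notMem_interior hp ha.2 ha'.1 h
  · exact (hconv.eq_of_wbtw_of_notMem_interior hp ha'.2 ha.1 h).symm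

end Ray

theorem IsOpen.ne_of_mem_frontier {X : Type*} [TopologicalSpace X] {Ω : Set X}
    (hop : IsOpen Ω) {p a : X} (hp : p ∈ Ω) (ha : a ∈ frontier Ω) : p ≠ a :=
  fun h => (hop.frontier_eq ▸ ha).2 (h ▸ hp)

theorem log_crossRatio_add_log_crossRatio {E : Type*} [NormedAddCommGroup E] {a b x y z : E}
    (hxa : x ≠ a) (hya : y ≠ a) (hza : z ≠ a) (hxb : x ≠ b) (hyb : y ≠ b) (hzb : z ≠ b) :
    Real.log ((‖a - y‖ * ‖b - x‖) / (‖a - x‖ * ‖b - y‖)) +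
        Real.log ((‖a - z‖ * ‖b - y‖) / (‖a - y‖ * ‖b - z‖)) =
      Real.log ((‖a - z‖ * ‖b - x‖) / (‖a - x‖ * ‖b - z‖)) := by
  have pos : ∀ {u v : E}, u ≠ v → 0 < ‖v - u‖ := fun h => norm_sub_pos_iff.2 h.symm
  rw [← Real.log_mul (by positivity [pos hya, pos hxb, pos hxa, pos hyb])
    (by positivity [pos hza, pos hyb, pos hya, pos hzb])]
  congr 1
  field_simp [(pos hya).ne', (pos hyb).ne']

theorem hilbert_dist_add_of_mem_segment_general
    {E : Type*} [NormedAddCommGroup E] [NormedSpace ℝ E]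
    (Ω : Set E)
    (hop : IsOpen Ω) (hconv : Convex ℝ Ω)
    (dΩ : E → E → ℝ) (hd : IsHilbertDist Ω dΩ)
    {x y z : E} (hx : x ∈ Ω) (hy : y ∈ Ω) (hz : z ∈ Ω)
    (hseg : y ∈ segment ℝ x z) :
    dΩ x z = dΩ x y + dΩ y z := by
  obtain ⟨hdiag, hdist⟩ := hd
  rcases eq_or_ne x y with rfl | hxy
  · rw [hdiag, zero_add]
  rcases eq_or_ne y z with rfl | hyz
  · rw [hdiag, add_zero]
  have hxyz : Wbtw ℝ x y z := mem_segment_iff_wbtw.1 hseg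
  have hxz : x ≠ z := hxyz.left_ne_right_of_ne_left hxy.symm
  obtain ⟨a, b, ha, hb, hxa, hzb, hxz_eq⟩ := hdist x hx z hz hxz
  obtain ⟨a₁, b₁, ha₁, hb₁, hxa₁, hyb₁, hxy_eq⟩ := hdist x hx y hy hxy
  obtain ⟨a₂, b₂, ha₂, hb₂, hya₂, hzb₂, hyz_eq⟩ := hdist y hy z hz hyz
  have hzxa : Wbtw ℝ z x a := (Wbtw.of_mem_openSegment hxa).symm
  have hxzb : Wbtw ℝ x z b := Wbtw.of_mem_openSegment hzb
  have interior_of {p} (hp : p ∈ Ω) : p ∈ interior Ω := hop.interior_eq.symm ▸ hp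
  obtain rfl : a = a₁ := hconv.eq_of_wbtw_of_mem_frontier (interior_of hx) hxz.symm ha ha₁
    hzxa ((Wbtw.of_mem_openSegment hxa₁).trans_expand_left hxyz hxy).symm
  obtain rfl : a = a₂ := hconv.eq_of_wbtw_of_mem_frontier (interior_of hy) hyz.symm ha ha₂
    (hzxa.symm.trans_right hxyz).symm (Wbtw.of_mem_openSegment hya₂).symm
  obtain rfl : b = b₁ := hconv.eq_of_wbtw_of_mem_frontier (interior_of hy) hxy hb hb₁
    (hxzb.trans_left hxyz) (Wbtw.of_mem_openSegment hyb₁)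
  obtain rfl : b = b₂ := hconv.eq_of_wbtw_of_mem_frontier (interior_of hz) hyz hb hb₂
    (hxzb.trans_left_right hxyz) (Wbtw.of_mem_openSegment hzb₂)
  have ne {p} (hp : p ∈ Ω) {c} (hc : c ∈ frontier Ω) : p ≠ c := hop.ne_of_mem_frontier hp hc
  rw [hxz_eq, hxy_eq, hyz_eq, ← mul_add, log_crossRatio_add_log_crossRatio (ne hx ha)
    (ne hy ha) (ne hz ha) (ne hx hb) (ne hy hb) (ne hz hb)]

/-- Affine segments are geodesics for the Hilbert metric: if `x, y, z ∈ Ω` are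
collinear with `y` in the closed segment from `x` to `z`, then
`dΩ x z = dΩ x y + dΩ y z`. -/
theorem hilbert_dist_add_of_mem_segment
    {E : Type*} [NormedAddCommGroup E] [NormedSpace ℝ E] [FiniteDimensional ℝ E]
    (Ω : Set E) (hne : Ω.Nonempty) (hbdd : Bornology.IsBounded Ω)
    (hop : IsOpen Ω) (hconv : Convex ℝ Ω)
    (dΩ : E → E → ℝ) (hd : IsHilbertDist Ω dΩ)
    {x y z : E} (hx : x ∈ Ω) (hy : y ∈ Ω) (hz : z ∈ Ω)
    (hcol : Collinear ℝ ({x, y, z} : Set E)) (hseg : y ∈ segment ℝ x z) :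
    dΩ x z = dΩ x y + dΩ y z :=
  hilbert_dist_add_of_mem_segment_general Ω hop hconv dΩ hd hx hy hz hseg
end

section
/- Projective transformations between properly convex domains are Hilbert isometries: let Ω, Ω' ⊆ E be nonempty bounded open convex sets, and let g : Ω → Ω' be a bijection of the form g(x) = (A x + u)/(f(x) + d), where A : E → E is linear, u ∈ E, f is a linear functional on E, d ∈ ℝ, and f(x) + d > 0 for all x ∈ Ω. Then d_{Ω'}(g(x), g(y)) = d_Ω(x, y) for all x, y ∈ Ω. -/
open Set

/-!
Along the line `x + t • (y - x)` a projective map acts through the Möbius reparametrization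
`t ↦ t α' / ((1 - t) α + t α')`, where `α, α'` are the denominators at `x, y`, and this
reparametrization preserves the cross ratio defining the Hilbert distance. It remains to see that
the endpoints of the chord of `Ω` go to the endpoints of the chord of `Ω'`. The denominator stays
positive up to each endpoint, since otherwise the images of chord points would escape to infinity
before reaching the frontier of `Ω'`. The image of an endpoint then lies in the closure of `Ω'`,
and not in `Ω'`: a projective map is constant on the segment between two points with the same
image, so injectivity on the open set `Ω` rules out a second preimage.
-/
section Ray

variable {E : Type*} [NormedAddCommGroup E] [NormedSpace ℝ E] {Ω : Set E} {x v : E} {s t : ℝ}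

theorem Convex.add_mul_smul_mem_of_mem_closure (hconv : Convex ℝ Ω) (hop : IsOpen Ω)
    (hx : x ∈ Ω) (ht : x + t • v ∈ closure Ω) {θ : ℝ} (hθ₀ : 0 ≤ θ) (hθ₁ : θ < 1) :
    x + (θ * t) • v ∈ Ω := by
  have h := hconv.add_smul_sub_mem_interior' ht (hop.interior_eq.symm ▸ hx)
    (t := 1 - θ) ⟨by linarith, by linarith⟩
  rw [hop.interior_eq] at h
  convert h using 1
  module

theorem Convex.lt_of_add_smul_mem_frontier (hconv : Convex ℝ Ω) (hop : IsOpen Ω) (hx : x ∈ Ω)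
    (ht : x + t • v ∈ frontier Ω) (ht₀ : t < 0) (hs : x + s • v ∈ Ω) : t < s := by
  by_contra! hst
  have hmem : x + (t / s) • (s • v) ∈ Ω :=
    hconv.add_smul_mem hx hs ⟨div_nonneg_of_nonpos ht₀.le (hst.trans ht₀.le),
      div_le_one_of_ge hst (hst.trans ht₀.le)⟩
  rw [smul_smul, div_mul_cancel₀ _ (hst.trans_lt ht₀).ne] at hmem
  exact (disjoint_frontier_iff_isOpen.2 hop).notMem_of_mem_left ht hmem

theorem Convex.eq_of_add_smul_mem_frontier (hconv : Convex ℝ Ω) (hop : IsOpen Ω) (hx : x ∈ Ω)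
    (hs : x + s • v ∈ frontier Ω) (ht : x + t • v ∈ frontier Ω) (hst : 0 < s * t) : s = t := by
  have key : ∀ {s t : ℝ}, x + s • v ∈ frontier Ω → x + t • v ∈ frontier Ω → 0 < s / t →
      1 ≤ s / t := fun {s t} hs ht hst ↦ by
    by_contra! h
    have hmem := hconv.add_mul_smul_mem_of_mem_closure hop hx (frontier_subset_closure ht) hst.le h
    rw [div_mul_cancel₀ _ (div_ne_zero_iff.1 hst.ne').2] at hmem
    exact (disjoint_frontier_iff_isOpen.2 hop).notMem_of_mem_left hs hmem
  have hpos : 0 < s / t := div_pos_iff.2 (pos_and_pos_or_neg_and_neg_of_mul_pos hst)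
  have h₁ := key hs ht hpos
  have h₂ := key ht hs (by rwa [← inv_div, inv_pos])
  rw [← inv_div, one_le_inv₀ hpos] at h₂
  exact (div_eq_one_iff_eq (right_ne_zero_of_mul hst.ne')).1 (le_antisymm h₂ h₁)

end Ray

section Projective

variable {E : Type*} [AddCommGroup E] [Module ℝ E] (A : E →ₗ[ℝ] E) (u : E) (f : E →ₗ[ℝ] ℝ) (d : ℝ)

noncomputable def projectiveMap (x : E) : E := (f x + d)⁻¹ • (A x + u)

noncomputable def projectiveReparam (α α' t : ℝ) : ℝ := t * α' / ((1 - t) * α + t * α')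

/-- The ratio inside the logarithm of the Hilbert distance, for the collinear points
`a = x + s • (y - x)`, `x`, `y`, `b = x + t • (y - x)`. -/
noncomputable def crossRatio (s t : ℝ) : ℝ := (1 - s) * t / (-s * (t - 1))

variable {A u f d}

theorem LinearMap.map_add_smul_sub_add_const (x y : E) (t : ℝ) :
    f (x + t • (y - x)) + d = (1 - t) * (f x + d) + t * (f y + d) := by
  simp only [map_add, map_smul, map_sub, smul_eq_mul]
  ring

theorem projectiveMap_add_smul_sub {x y : E} {t : ℝ} (hx : f x + d ≠ 0) (hy : f y + d ≠ 0)
    (ht : f (x + t • (y - x)) + d ≠ 0) :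
    projectiveMap A u f d (x + t • (y - x)) = projectiveMap A u f d x +
      projectiveReparam (f x + d) (f y + d) t •
        (projectiveMap A u f d y - projectiveMap A u f d x) := by
  rw [LinearMap.map_add_smul_sub_add_const] at ht
  rw [projectiveMap, LinearMap.map_add_smul_sub_add_const, projectiveMap, projectiveMap,
    projectiveReparam]
  simp only [map_add, map_smul, map_sub]
  match_scalars <;> field_simp <;> ring

theorem projectiveReparam_neg {α α' s : ℝ} (hα' : 0 < α') (hs : s < 0)
    (hD : 0 < (1 - s) * α + s * α') : projectiveReparam α α' s < 0 :=
  div_neg_of_neg_of_pos (mul_neg_of_neg_of_pos hs hα') hD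

theorem one_lt_projectiveReparam {α α' t : ℝ} (hα : 0 < α) (ht : 1 < t)
    (hD : 0 < (1 - t) * α + t * α') : 1 < projectiveReparam α α' t :=
  (one_lt_div hD).2 (by nlinarith)

theorem crossRatio_projectiveReparam {α α' s t : ℝ} (hα : α ≠ 0) (hα' : α' ≠ 0)
    (hs : (1 - s) * α + s * α' ≠ 0) (ht : (1 - t) * α + t * α' ≠ 0) :
    crossRatio (projectiveReparam α α' s) (projectiveReparam α α' t) = crossRatio s t := by
  have h₁ : 1 - projectiveReparam α α' s = (1 - s) * α / ((1 - s) * α + s * α') := by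
    rw [projectiveReparam]; field_simp; ring
  have h₂ : projectiveReparam α α' t - 1 = (t - 1) * α / ((1 - t) * α + t * α') := by
    rw [projectiveReparam]; field_simp; ring
  rw [crossRatio, h₁, h₂, projectiveReparam, projectiveReparam, crossRatio]
  field_simp
  rw [mul_right_comm s, mul_div_mul_right _ _ (by contrapose! ht; linarith)]

end Projective

section Hilbert

variable {E : Type*} [NormedAddCommGroup E] [NormedSpace ℝ E] {Ω : Set E} {dΩ : E → E → ℝ}
  {x y : E}

theorem exists_one_lt_eq_add_smul_of_mem_openSegment {b : E} (h : y ∈ openSegment ℝ x b) :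
    ∃ t : ℝ, 1 < t ∧ b = x + t • (y - x) := by
  obtain ⟨θ, ⟨hθ₀, hθ₁⟩, rfl⟩ := (openSegment_eq_image' ℝ x b).subset h
  refine ⟨θ⁻¹, (one_lt_inv₀ hθ₀).2 hθ₁, ?_⟩
  rw [add_sub_cancel_left, smul_smul, inv_mul_cancel₀ hθ₀.ne', one_smul, add_sub_cancel]

theorem IsHilbertDist.exists_frontier_params (hd : IsHilbertDist Ω dΩ) (hx : x ∈ Ω) (hy : y ∈ Ω)
    (hxy : x ≠ y) :
    ∃ s t : ℝ, s < 0 ∧ 1 < t ∧ x + s • (y - x) ∈ frontier Ω ∧ x + t • (y - x) ∈ frontier Ω ∧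
      dΩ x y = 1 / 2 * Real.log (crossRatio s t) := by
  obtain ⟨a, b, ha, hb, hxa, hyb, hdxy⟩ := hd.2 x hx y hy hxy
  obtain ⟨s, hs, rfl⟩ :=
    exists_one_lt_eq_add_smul_of_mem_openSegment (openSegment_symm ℝ a y ▸ hxa)
  obtain ⟨t, ht, rfl⟩ := exists_one_lt_eq_add_smul_of_mem_openSegment hyb
  have ha' : y + s • (x - y) = x + (1 - s) • (y - x) := by module
  refine ⟨1 - s, t, by linarith, ht, ha' ▸ ha, hb, ?_⟩
  have hv : ‖y - x‖ ≠ 0 := norm_ne_zero_iff.2 (sub_ne_zero.2 hxy.symm)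
  rw [hdxy, ha', crossRatio]
  congr 2
  simp only [show ∀ r : ℝ, x + r • (y - x) - y = (r - 1) • (y - x) by intro r; module,
    add_sub_cancel_left, norm_smul, Real.norm_eq_abs]
  rw [abs_of_neg (by linarith : 1 - s - 1 < 0), abs_of_neg (by linarith : 1 - s < 0),
    abs_of_pos (by linarith : 0 < t), abs_of_pos (by linarith : 0 < t - 1)]
  field_simp
  ring

theorem IsHilbertDist.apply_eq_of_frontier_params (hd : IsHilbertDist Ω dΩ) (hop : IsOpen Ω)
    (hconv : Convex ℝ Ω) (hx : x ∈ Ω) (hy : y ∈ Ω) (hxy : x ≠ y) {s t : ℝ} (hs : s < 0)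
    (ht : 1 < t) (ha : x + s • (y - x) ∈ frontier Ω) (hb : x + t • (y - x) ∈ frontier Ω) :
    dΩ x y = 1 / 2 * Real.log (crossRatio s t) := by
  obtain ⟨s', t', hs', ht', ha', hb', hdxy⟩ := hd.exists_frontier_params hx hy hxy
  rw [hdxy, hconv.eq_of_add_smul_mem_frontier hop hx ha' ha (by nlinarith),
    hconv.eq_of_add_smul_mem_frontier hop hx hb' hb (by nlinarith)]

end Hilbert

section ProjectiveDomain

open Filter Topology

variable {E : Type*} [NormedAddCommGroup E] [NormedSpace ℝ E] {Ω Ω' : Set E}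
  {A : E →ₗ[ℝ] E} {u : E} {f : E →ₗ[ℝ] ℝ} {d : ℝ}

/-- `projectiveMap` is constant on the segment from `z` to `c`, and that segment enters `Ω`. -/
theorem eq_of_projectiveMap_eq (hop : IsOpen Ω) (hinj : InjOn (projectiveMap A u f d) Ω)
    {z c : E} (hz : z ∈ Ω) (hzpos : 0 < f z + d) (hcpos : 0 < f c + d)
    (heq : projectiveMap A u f d c = projectiveMap A u f d z) : c = z := by
  have hconst : ∀ μ ∈ Icc (0 : ℝ) 1,
      projectiveMap A u f d (z + μ • (c - z)) = projectiveMap A u f d z := by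
    intro μ ⟨hμ₀, hμ₁⟩
    have hμpos : 0 < f (z + μ • (c - z)) + d := by
      rw [LinearMap.map_add_smul_sub_add_const]
      exact convex_Ioi (0 : ℝ) hzpos hcpos (sub_nonneg.2 hμ₁) hμ₀ (sub_add_cancel 1 μ)
    rw [projectiveMap_add_smul_sub hzpos.ne' hcpos.ne' hμpos.ne', heq, sub_self, smul_zero,
      add_zero]
  have hnear : ∀ᶠ μ in 𝓝[>] (0 : ℝ), z + μ • (c - z) ∈ Ω := by
    have hcont : Continuous fun μ : ℝ ↦ z + μ • (c - z) := by fun_prop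
    exact nhdsWithin_le_nhds ((hcont.tendsto' 0 z (by simp)).eventually (hop.mem_nhds hz))
  obtain ⟨μ, hμΩ, hμ⟩ := (hnear.and (Ioo_mem_nhdsGT one_pos)).exists
  have h := hinj hμΩ hz (hconst μ (Ioo_subset_Icc_self hμ))
  rw [add_eq_left, smul_eq_zero, sub_eq_zero] at h
  exact h.resolve_left hμ.1.ne'

theorem projectiveMap_mem_frontier [FiniteDimensional ℝ E] (hop : IsOpen Ω) (hop' : IsOpen Ω')
    (hP : BijOn (projectiveMap A u f d) Ω Ω') (hpos : ∀ z ∈ Ω, 0 < f z + d) {a : E}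
    (ha : a ∈ frontier Ω) (hapos : 0 < f a + d) : projectiveMap A u f d a ∈ frontier Ω' := by
  have hcont : ContinuousAt (projectiveMap A u f d) a :=
    ((f.continuous_of_finiteDimensional.continuousAt.add continuousAt_const).inv₀ hapos.ne').smul
      (A.continuous_of_finiteDimensional.continuousAt.add continuousAt_const)
  rw [hop'.frontier_eq]
  refine ⟨hP.image_eq ▸ hcont.continuousWithinAt.mem_closure_image (frontier_subset_closure ha),
    fun h ↦ ?_⟩
  obtain ⟨z, hz, hPz⟩ := hP.surjOn h
  rw [eq_of_projectiveMap_eq hop hP.injOn hz (hpos z hz) hapos hPz.symm] at ha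
  exact (disjoint_frontier_iff_isOpen.2 hop).notMem_of_mem_left ha hz

theorem projectiveMap_denom_pos_of_mem_frontier (hop : IsOpen Ω) (hconv : Convex ℝ Ω)
    (hop' : IsOpen Ω') (hconv' : Convex ℝ Ω') (hpos : ∀ z ∈ Ω, 0 < f z + d)
    (hmaps : MapsTo (projectiveMap A u f d) Ω Ω') {x y : E} (hx : x ∈ Ω) (hy : y ∈ Ω) {s l : ℝ}
    (hs : s < 0) (ha : x + s • (y - x) ∈ frontier Ω) (hl : l < 0)
    (ha' : projectiveMap A u f d x + l • (projectiveMap A u f d y - projectiveMap A u f d x) ∈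
      frontier Ω') :
    0 < f (x + s • (y - x)) + d := by
  have hα := hpos x hx
  have hα' := hpos y hy
  have hchord : ∀ t ∈ Ioo s 0, x + t • (y - x) ∈ Ω := fun t ht ↦ by
    simpa only [div_mul_cancel₀ _ hs.ne] using
      hconv.add_mul_smul_mem_of_mem_closure hop hx (frontier_subset_closure ha)
        (div_nonneg_of_nonpos ht.2.le hs.le) ((div_lt_one_of_neg hs).2 ht.1)
  have hbound : ∀ t ∈ Ioo s 0, l * ((1 - t) * (f x + d) + t * (f y + d)) < t * (f y + d) := by
    intro t ht
    have hDt := hpos _ (hchord t ht)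
    have hmem := hmaps (hchord t ht)
    rw [projectiveMap_add_smul_sub hα.ne' hα'.ne' hDt.ne'] at hmem
    rw [LinearMap.map_add_smul_sub_add_const] at hDt
    have hlt := hconv'.lt_of_add_smul_mem_frontier hop' (hmaps hx) ha' hl hmem
    rwa [projectiveReparam, lt_div_iff₀ hDt] at hlt
  -- the chord points stay above the frontier parameter `l < 0` of their images; in the limit
  -- `t → s` this is only possible for a positive denominator at `s`
  have hlim : l * ((1 - s) * (f x + d) + s * (f y + d)) ≤ s * (f y + d) :=
    closure_lt_subset_le (f := fun t ↦ l * ((1 - t) * (f x + d) + t * (f y + d)))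
      (g := fun t ↦ t * (f y + d)) (by fun_prop) (by fun_prop)
      (closure_mono hbound (by rw [closure_Ioo hs.ne]; exact left_mem_Icc.2 hs.le))
  rw [LinearMap.map_add_smul_sub_add_const]
  nlinarith

end ProjectiveDomain

theorem projective_map_is_hilbert_isometry_general
    {E : Type*} [NormedAddCommGroup E] [NormedSpace ℝ E] [FiniteDimensional ℝ E]
    (Ω Ω' : Set E)
    (hop : IsOpen Ω) (hconv : Convex ℝ Ω)
    (hop' : IsOpen Ω') (hconv' : Convex ℝ Ω')
    (dΩ dΩ' : E → E → ℝ) (hd : IsHilbertDist Ω dΩ) (hd' : IsHilbertDist Ω' dΩ')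
    (A : E →ₗ[ℝ] E) (u : E) (f : E →ₗ[ℝ] ℝ) (d : ℝ)
    (hpos : ∀ x ∈ Ω, 0 < f x + d)
    (g : E → E) (hg : ∀ x ∈ Ω, g x = (f x + d)⁻¹ • (A x + u))
    (hbij : Set.BijOn g Ω Ω') :
    ∀ x ∈ Ω, ∀ y ∈ Ω, dΩ' (g x) (g y) = dΩ x y := by
  intro x hx y hy
  rcases eq_or_ne x y with rfl | hxy
  · rw [hd.1, hd'.1]
  set P := projectiveMap A u f d
  have hgP : EqOn g P Ω := hg
  have hP : BijOn P Ω Ω' := hbij.congr hgP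
  have hPxy : P x ≠ P y := hP.injOn.ne hx hy hxy
  obtain ⟨s, t, hs, ht, ha, hb, hdxy⟩ := hd.exists_frontier_params hx hy hxy
  obtain ⟨l, -, hl, -, hla, -⟩ := hd'.exists_frontier_params (hP.mapsTo hx) (hP.mapsTo hy) hPxy
  obtain ⟨l', -, hl', -, hlb, -⟩ :=
    hd'.exists_frontier_params (hP.mapsTo hy) (hP.mapsTo hx) hPxy.symm
  -- seen from `y`, the endpoint `b` lies at the negative parameter `1 - t`
  have hba : y + (1 - t) • (x - y) = x + t • (y - x) := by module
  have hDa := projectiveMap_denom_pos_of_mem_frontier hop hconv hop' hconv' hpos hP.mapsTo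
    hx hy hs ha hl hla
  have hDb := hba ▸ projectiveMap_denom_pos_of_mem_frontier hop hconv hop' hconv' hpos hP.mapsTo
    hy hx (by linarith) (hba ▸ hb) hl' hlb
  have hPa := projectiveMap_mem_frontier hop hop' hP hpos ha hDa
  have hPb := projectiveMap_mem_frontier hop hop' hP hpos hb hDb
  have hα := hpos x hx
  have hα' := hpos y hy
  rw [projectiveMap_add_smul_sub hα.ne' hα'.ne' hDa.ne'] at hPa
  rw [projectiveMap_add_smul_sub hα.ne' hα'.ne' hDb.ne'] at hPb
  rw [LinearMap.map_add_smul_sub_add_const] at hDa hDb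
  rw [hgP hx, hgP hy, hdxy, hd'.apply_eq_of_frontier_params hop' hconv' (hP.mapsTo hx)
    (hP.mapsTo hy) hPxy (projectiveReparam_neg hα' hs hDa) (one_lt_projectiveReparam hα ht hDb)
    hPa hPb,
    crossRatio_projectiveReparam hα.ne' hα'.ne' hDa.ne' hDb.ne']

/-- Projective transformations between properly convex domains are Hilbert
isometries: if `g : Ω → Ω'` is a bijection of the form
`g x = (A x + u) / (f x + d)` with `A` linear, `f` a linear functional, and
`f x + d > 0` on `Ω`, then `d_{Ω'}(g x, g y) = d_Ω(x, y)` for all `x, y ∈ Ω`. -/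
theorem projective_map_is_hilbert_isometry
    {E : Type*} [NormedAddCommGroup E] [NormedSpace ℝ E] [FiniteDimensional ℝ E]
    (Ω Ω' : Set E)
    (hne : Ω.Nonempty) (hbdd : Bornology.IsBounded Ω) (hop : IsOpen Ω) (hconv : Convex ℝ Ω)
    (hne' : Ω'.Nonempty) (hbdd' : Bornology.IsBounded Ω') (hop' : IsOpen Ω') (hconv' : Convex ℝ Ω')
    (dΩ dΩ' : E → E → ℝ) (hd : IsHilbertDist Ω dΩ) (hd' : IsHilbertDist Ω' dΩ')
    (A : E →ₗ[ℝ] E) (u : E) (f : E →ₗ[ℝ] ℝ) (d : ℝ)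
    (hpos : ∀ x ∈ Ω, 0 < f x + d)
    (g : E → E) (hg : ∀ x ∈ Ω, g x = (f x + d)⁻¹ • (A x + u))
    (hbij : Set.BijOn g Ω Ω') :
    ∀ x ∈ Ω, ∀ y ∈ Ω, dΩ' (g x) (g y) = dΩ x y :=
  projective_map_is_hilbert_isometry_general Ω Ω' hop hconv hop' hconv' dΩ dΩ' hd hd' A u f d hpos g
    hg hbij
end

section
/- Let X be a compact metric space and f a continuous flow on X. For u ∈ X define W^{su}(u) := { w ∈ X : d(f^{−t}(w), f^{−t}(u)) → 0 as t → +∞ }. Suppose the set of periodic points p (those with f^{T_p}(p) = p for some T_p > 0) such that W^{su}(p) is dense in X is itself dense in X. Then f is topologically mixing: for all nonempty open sets U, V ⊆ X there exists T > 0 such that fᵗ(U) ∩ V ≠ ∅ for all t ≥ T. -/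
/-!
Pick a periodic point `p ∈ U` of period `T` whose strong unstable set is dense. For every phase
`s ∈ [0, T]` some `w ∈ W^{su}(p)` has `fˢ w ∈ V`; openness in `s` and compactness of `[0, T]` make
one waiting time `N` work for all phases, i.e. `f^{-τ} w` lies within `r` of `f^{-τ} p` for
`τ ≥ N`. Writing a large time as `t = s + nT` with `nT ≥ N`, the point `f^{-nT} w` is close to
`f^{-nT} p = p`, hence lies in `U`, and `fᵗ` carries it to `fˢ w ∈ V`.
-/

open Set Filter Metric

/-- The strong unstable set of `u` for the flow `f`: points `w` with
`d(f⁻ᵗ w, f⁻ᵗ u) → 0` as `t → +∞`. -/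
def strongUnstable {X : Type*} [MetricSpace X] (f : ℝ → X → X) (u : X) : Set X :=
  {w : X | Filter.Tendsto (fun t : ℝ => dist (f (-t) w) (f (-t) u)) Filter.atTop (nhds 0)}

namespace Flow

theorem apply_zsmul_of_apply_eq_self {τ α : Type*} [TopologicalSpace τ] [TopologicalSpace α]
    [AddGroup τ] (ϕ : Flow τ α) {T : τ} {p : α} (hp : ϕ T p = p) (n : ℤ) : ϕ (n • T) p = p :=
  letI := ϕ.toAddAction
  (AddAction.stabilizer τ p).zsmul_mem hp n

variable {X : Type*} [MetricSpace X] (ϕ : Flow ℝ X)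

theorem exists_uniform_approach_time {p : X} (hp : Dense (strongUnstable ϕ p)) {V : Set X}
    (hV : IsOpen V) (hVne : V.Nonempty) {K : Set ℝ} (hK : IsCompact K) {r : ℝ} (hr : 0 < r) :
    ∃ N, ∀ s ∈ K, ∃ w, ϕ s w ∈ V ∧ ∀ t ≥ N, dist (ϕ (-t) w) (ϕ (-t) p) < r := by
  let O : ℝ → Set ℝ := fun N =>
    ⋃ w ∈ {w | ∀ t ≥ N, dist (ϕ (-t) w) (ϕ (-t) p) < r}, (fun s => ϕ s w) ⁻¹' V
  have hO_open : ∀ N, IsOpen (O N) := fun N =>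
    isOpen_biUnion fun w _ => hV.preimage (ϕ.continuous continuous_id continuous_const)
  have hO_mono : Monotone O := fun N N' hNN' =>
    biUnion_mono (fun w hw t ht => hw t (hNN'.trans ht)) fun _ _ => subset_rfl
  have hK_cover : K ⊆ ⋃ N, O N := by
    intro s _
    have hsurj : Function.Surjective (ϕ s) := (ϕ.toHomeomorph s).surjective
    obtain ⟨w, hw, hsw⟩ :=
      hp.exists_mem_open (hV.preimage (ϕ.continuous_toFun s)) (hVne.preimage hsurj)
    obtain ⟨N, hN⟩ := eventually_atTop.mp (hw.eventually (gt_mem_nhds hr))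
    exact mem_iUnion.2 ⟨N, mem_biUnion hN hsw⟩
  obtain ⟨N, hN⟩ := hK.elim_directed_cover O hO_open hK_cover hO_mono.directed_le
  refine ⟨N, fun s hs => ?_⟩
  obtain ⟨w, hw, hsw⟩ := mem_iUnion₂.mp (hN hs)
  exact ⟨w, hsw, hw⟩

end Flow

theorem mixing_of_dense_periodic_with_dense_unstables_general
    {X : Type*} [MetricSpace X]
    (f : ℝ → X → X) (hcont : Continuous fun q : ℝ × X => f q.1 q.2)
    (hid : ∀ x : X, f 0 x = x)
    (hflow : ∀ s t : ℝ, ∀ x : X, f (s + t) x = f s (f t x))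
    (hdense : Dense {p : X | (∃ Tp > (0:ℝ), f Tp p = p) ∧ Dense (strongUnstable f p)}) :
    ∀ U V : Set X, IsOpen U → IsOpen V → U.Nonempty → V.Nonempty →
      ∃ T > (0:ℝ), ∀ t ≥ T, ((f t) '' U ∩ V).Nonempty := by
  intro U V hU hV hUne hVne
  let ϕ : Flow ℝ X := ⟨f, hcont, hflow, hid⟩
  obtain ⟨p, ⟨⟨Tp, hTp, hper⟩, hdun⟩, hpU⟩ := hdense.exists_mem_open hU hUne
  obtain ⟨r, hr, hball⟩ := isOpen_iff.mp hU p hpU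
  obtain ⟨N, hN⟩ :=
    ϕ.exists_uniform_approach_time hdun hV hVne (isCompact_Icc (a := 0) (b := Tp)) hr
  refine ⟨|N| + Tp, by positivity, fun t ht => ?_⟩
  set n := toIcoDiv hTp 0 t
  set s := toIcoMod hTp 0 t
  have hts : s + n • Tp = t := toIcoMod_add_toIcoDiv_zsmul hTp 0 t
  have hs : s ∈ Ico 0 Tp := toIcoMod_mem_Ico' hTp t
  obtain ⟨w, hwV, hw⟩ := hN s (Ico_subset_Icc_self hs)
  have hp_back : ϕ (-(n • Tp)) p = p := by
    rw [← neg_zsmul]; exact ϕ.apply_zsmul_of_apply_eq_self hper (-n)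
  refine ⟨ϕ t (ϕ (-(n • Tp)) w), ⟨_, hball ?_, rfl⟩, ?_⟩
  · have hnN : N ≤ n • Tp := by linarith [le_abs_self N, hs.2]
    exact mem_ball.mpr (hp_back ▸ hw (n • Tp) hnN)
  · have hw_back : ϕ (n • Tp) (ϕ (-(n • Tp)) w) = w := (ϕ.toHomeomorph _).apply_symm_apply w
    rwa [← hts, ϕ.map_add, hw_back]

/-- If the periodic points whose strong unstable sets are dense form a dense subset of
the compact phase space, then the continuous flow is topologically mixing. -/
theorem mixing_of_dense_periodic_with_dense_unstables
    {X : Type*} [MetricSpace X] [CompactSpace X]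
    (f : ℝ → X → X) (hcont : Continuous fun q : ℝ × X => f q.1 q.2)
    (hid : ∀ x : X, f 0 x = x)
    (hflow : ∀ s t : ℝ, ∀ x : X, f (s + t) x = f s (f t x))
    (hdense : Dense {p : X | (∃ Tp > (0:ℝ), f Tp p = p) ∧ Dense (strongUnstable f p)}) :
    ∀ U V : Set X, IsOpen U → IsOpen V → U.Nonempty → V.Nonempty →
      ∃ T > (0:ℝ), ∀ t ≥ T, ((f t) '' U ∩ V).Nonempty :=
  mixing_of_dense_periodic_with_dense_unstables_general f hcont hid hflow hdense
end

section
/- Let X be a proper metric space (closed bounded sets are compact) and let Γ be a group acting on X by isometries, properly discontinuously and cocompactly. Let μ be a Borel measure on X for which there exist constants 0 < c ≤ C < ∞ with c ≤ μ(B(x,1)) ≤ C for all x ∈ X. Then for every basepoint x₀ ∈ X, the critical exponent of Γ equals the volume growth exponent of μ: limsup_{r→∞} (1/r)·log #{ γ ∈ Γ : d(x₀, γ·x₀) ≤ r } = limsup_{r→∞} (1/r)·log μ(B(x₀, r)). -/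
/-!
The orbit `Γ • x₀` is coarsely dense (cocompactness) and locally finite (proper discontinuity).
Hence `B(x₀, r)` is covered by the `R`-balls around the orbit points in `B(x₀, r + R)`, each
covered by a fixed number of unit balls, while the unit balls around the orbit points in
`B(x₀, r)` lie in `B(x₀, r + 1)` and overlap at most `#{γ : d(x₀, γ x₀) ≤ 2}` times. So orbit
counting and volume agree up to multiplicative constants and a shift of `r`, neither of which
changes the exponential growth rate `limsup (log f r) / r`.
-/

open Set Filter Metric MeasureTheory ENNReal

theorem eventually_div_le_add_of_le_add {F G : ℝ → ℝ} {a K b ε : ℝ}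
    (hFG : ∀ᶠ r in atTop, F r ≤ G (r + a) + K) (hG : ∀ᶠ r in atTop, G r / r ≤ b)
    (hε : 0 < ε) : ∀ᶠ r in atTop, F r / r ≤ b + ε := by
  have hshift : Tendsto (· + a) atTop atTop := tendsto_atTop_add_const_right atTop a tendsto_id
  filter_upwards [hFG, hshift.eventually hG, eventually_gt_atTop 0,
    hshift.eventually (eventually_gt_atTop 0),
    (tendsto_id.const_mul_atTop hε).eventually_ge_atTop (b * a + K)] with r hF hG hr hra hεr
  rw [div_le_iff₀ hra] at hG
  rw [div_le_iff₀ hr]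
  simp only [id] at hεr
  linarith

theorem Real.sInf_eq_sInf_of_forall_add_mem {S T : Set ℝ}
    (hST : ∀ b ∈ S, ∀ ε > 0, b + ε ∈ T) (hTS : ∀ b ∈ T, ∀ ε > 0, b + ε ∈ S) :
    sInf S = sInf T := by
  have bdd : ∀ {S T : Set ℝ}, (∀ b ∈ S, ∀ ε > 0, b + ε ∈ T) → BddBelow T → BddBelow S :=
    fun hST ⟨m, hm⟩ => ⟨m - 1, fun b hb => by linarith [hm (hST b hb 1 one_pos)]⟩
  have le : ∀ {S T : Set ℝ}, (∀ b ∈ S, ∀ ε > 0, b + ε ∈ T) → S.Nonempty → BddBelow T →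
      sInf T ≤ sInf S := fun hST hS hT =>
    le_csInf hS fun b hb => le_of_forall_pos_le_add fun ε hε => csInf_le hT (hST b hb ε hε)
  rcases S.eq_empty_or_nonempty with rfl | hS
  · rcases T.eq_empty_or_nonempty with rfl | ⟨b, hb⟩
    · rfl
    · exact absurd (hTS b hb 1 one_pos) (notMem_empty _)
  have hT : T.Nonempty := let ⟨b, hb⟩ := hS; ⟨_, hST b hb 1 one_pos⟩
  by_cases hbdd : BddBelow S
  · exact le_antisymm (le hTS hT hbdd) (le hST hS (bdd hTS hbdd))
  · rw [Real.sInf_of_not_bddBelow hbdd, Real.sInf_of_not_bddBelow (mt (bdd hST) hbdd)]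

/-- A `limsup` on `ℝ` is a junk value when the function is not bounded; comparing the sets of
eventual upper bounds directly makes the equality hold in every case. -/
theorem limsup_div_eq_of_le_add {F G : ℝ → ℝ} {a b K L : ℝ}
    (hFG : ∀ᶠ r in atTop, F r ≤ G (r + a) + K) (hGF : ∀ᶠ r in atTop, G r ≤ F (r + b) + L) :
    limsup (fun r => F r / r) atTop = limsup (fun r => G r / r) atTop := by
  rw [limsup_eq, limsup_eq]
  exact Real.sInf_eq_sInf_of_forall_add_mem
    (fun _ hβ _ hε => eventually_div_le_add_of_le_add hGF hβ hε)
    (fun _ hβ _ hε => eventually_div_le_add_of_le_add hFG hβ hε)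

theorem eventually_log_toReal_le_of_le_mul {f g : ℝ → ℝ≥0∞} {a : ℝ} {K : ℝ≥0∞}
    (hf : ∀ᶠ r in atTop, f r ≠ 0) (hg : ∀ᶠ r in atTop, g r ≠ 0 ∧ g r ≠ ∞) (hK : K ≠ ∞)
    (hfg : ∀ᶠ r in atTop, f r ≤ K * g (r + a)) :
    ∀ᶠ r in atTop, Real.log (f r).toReal ≤ Real.log (g (r + a)).toReal + Real.log K.toReal := by
  have hshift : Tendsto (· + a) atTop atTop := tendsto_atTop_add_const_right atTop a tendsto_id
  filter_upwards [hf, hshift.eventually hg, hfg] with r hf0 ⟨hg0, hgtop⟩ hle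
  have hK0 : K ≠ 0 := by
    rintro rfl
    exact hf0 (le_zero_iff.1 (zero_mul (g (r + a)) ▸ hle))
  have hftop : f r ≠ ∞ := ne_top_of_le_ne_top (mul_ne_top hK hgtop) hle
  rw [← Real.log_mul (toReal_ne_zero.2 ⟨hg0, hgtop⟩) (toReal_ne_zero.2 ⟨hK0, hK⟩), mul_comm,
    ← toReal_mul]
  exact Real.log_le_log (toReal_pos hf0 hftop) (toReal_mono (mul_ne_top hK hgtop) hle)

theorem limsup_log_toReal_div_eq_of_le_mul {f g : ℝ → ℝ≥0∞} {a b : ℝ} {K L : ℝ≥0∞}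
    (hf : ∀ᶠ r in atTop, f r ≠ 0 ∧ f r ≠ ∞) (hg : ∀ᶠ r in atTop, g r ≠ 0 ∧ g r ≠ ∞)
    (hK : K ≠ ∞) (hL : L ≠ ∞)
    (hfg : ∀ᶠ r in atTop, f r ≤ K * g (r + a)) (hgf : ∀ᶠ r in atTop, g r ≤ L * f (r + b)) :
    limsup (fun r => Real.log (f r).toReal / r) atTop =
      limsup (fun r => Real.log (g r).toReal / r) atTop :=
  limsup_div_eq_of_le_add
    (eventually_log_toReal_le_of_le_mul (hf.mono fun _ h => h.1) hg hK hfg)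
    (eventually_log_toReal_le_of_le_mul (hg.mono fun _ h => h.1) hf hL hgf)

open scoped Classical Finset in
theorem sum_measure_le_mul_measure_of_forall_card_le {α ι : Type*} [MeasurableSpace α]
    (μ : Measure α) {s : Finset ι} {t : ι → Set α} {u : Set α} {M : ℕ}
    (ht : ∀ i ∈ s, MeasurableSet (t i)) (htu : ∀ i ∈ s, t i ⊆ u)
    (hM : ∀ x, #{i ∈ s | x ∈ t i} ≤ M) :
    ∑ i ∈ s, μ (t i) ≤ M * μ u := by
  have hcount : ∀ x, ∑ i ∈ s, (t i).indicator 1 x = (#{i ∈ s | x ∈ t i} : ℝ≥0∞) := by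
    intro x
    simp [Set.indicator_apply, Finset.sum_boole]
  calc ∑ i ∈ s, μ (t i) = ∑ i ∈ s, ∫⁻ x, (t i).indicator 1 x ∂μ.restrict u :=
        Finset.sum_congr rfl fun i hi => by
          rw [lintegral_indicator_one (ht i hi), Measure.restrict_eq_self _ (htu i hi)]
    _ = ∫⁻ x, ∑ i ∈ s, (t i).indicator 1 x ∂μ.restrict u :=
        (lintegral_finsetSum' s fun i hi => (measurable_one.indicator (ht i hi)).aemeasurable).symm
    _ ≤ ∫⁻ _, (M : ℝ≥0∞) ∂μ.restrict u :=
        lintegral_mono fun x => by rw [hcount]; exact Nat.cast_le.2 (hM x)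
    _ = M * μ u := by rw [lintegral_const, Measure.restrict_apply_univ]

theorem ProperlyDiscontinuousSMul.of_finite_image_inter_self {Γ T : Type*} [TopologicalSpace T]
    [SMul Γ T]
    (h : ∀ K : Set T, IsCompact K → {γ : Γ | ((γ • ·) '' K ∩ K).Nonempty}.Finite) :
    ProperlyDiscontinuousSMul Γ T where
  finite_disjoint_inter_image {K L} hK hL :=
    (h (K ∪ L) (hK.union hL)).subset fun _ ⟨_, ⟨x, hx, hγx⟩, hxL⟩ =>
      ⟨_, ⟨x, .inl hx, hγx⟩, .inr hxL⟩

section OrbitGrowth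

variable {X Γ : Type*} [PseudoMetricSpace X] [Group Γ] [MulAction Γ X]

variable (Γ) in
def displacementSet (x₀ : X) (r : ℝ) : Set Γ := {γ | dist x₀ (γ • x₀) ≤ r}

@[simp]
theorem mem_displacementSet {x₀ : X} {r : ℝ} {γ : Γ} :
    γ ∈ displacementSet Γ x₀ r ↔ dist x₀ (γ • x₀) ≤ r :=
  Iff.rfl

theorem one_mem_displacementSet {x₀ : X} {r : ℝ} (hr : 0 ≤ r) :
    (1 : Γ) ∈ displacementSet Γ x₀ r := by
  simpa using hr

theorem finite_displacementSet [ProperSpace X] [ProperlyDiscontinuousSMul Γ X] (x₀ : X) (r : ℝ) :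
    (displacementSet Γ x₀ r).Finite :=
  (ProperlyDiscontinuousSMul.finite_disjoint_inter_image isCompact_singleton
    (isCompact_closedBall x₀ r)).subset fun γ hγ =>
      ⟨γ • x₀, mem_image_of_mem _ rfl, mem_closedBall_comm.1 hγ⟩

theorem exists_forall_exists_dist_smul_le [IsIsometricSMul Γ X] {D : Set X}
    (hD : Bornology.IsBounded D) (hcov : ⋃ γ : Γ, (γ • ·) '' D = univ) (x₀ : X) :
    ∃ R, ∀ y : X, ∃ γ : Γ, dist y (γ • x₀) ≤ R := by
  obtain ⟨R, hR⟩ := hD.subset_closedBall x₀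
  refine ⟨R, fun y => ?_⟩
  obtain ⟨γ, d, hd, rfl⟩ := mem_iUnion.1 (hcov ▸ mem_univ y)
  exact ⟨γ, by rw [dist_smul]; exact hR hd⟩

theorem exists_forall_measure_closedBall_smul_le [ProperSpace X] [IsIsometricSMul Γ X]
    [MeasurableSpace X] (μ : Measure X) {C : ℝ≥0∞} (hC : ∀ x, μ (ball x 1) ≤ C) (x₀ : X)
    (R : ℝ) : ∃ n : ℕ, ∀ γ : Γ, μ (closedBall (γ • x₀) R) ≤ n * C := by
  obtain ⟨t, -, ht⟩ := (isCompact_closedBall x₀ R).elim_nhds_subcover (ball · 1)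
    fun x _ => ball_mem_nhds x one_pos
  refine ⟨t.card, fun γ => ?_⟩
  have hcover : closedBall (γ • x₀) R ⊆ ⋃ z ∈ t, ball (γ • z) 1 := by
    rw [← Metric.smul_closedBall]
    refine (smul_set_mono ht).trans ?_
    simp only [smul_set_iUnion₂, Metric.smul_ball, subset_rfl]
  calc μ (closedBall (γ • x₀) R) ≤ ∑ z ∈ t, μ (ball (γ • z) 1) :=
        (measure_mono hcover).trans (measure_biUnion_finset_le t _)
    _ ≤ t.card * C := by
        rw [← nsmul_eq_mul]; exact Finset.sum_le_card_nsmul _ _ _ fun z _ => hC _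

theorem measure_ball_le_ncard_displacementSet_mul [ProperSpace X]
    [ProperlyDiscontinuousSMul Γ X] [MeasurableSpace X] (μ : Measure X) {x₀ : X} {R : ℝ}
    (hR : ∀ y : X, ∃ γ : Γ, dist y (γ • x₀) ≤ R) {L : ℝ≥0∞}
    (hL : ∀ γ : Γ, μ (closedBall (γ • x₀) R) ≤ L) (r : ℝ) :
    μ (ball x₀ r) ≤ (displacementSet Γ x₀ (r + R)).ncard * L := by
  have hfin := finite_displacementSet (Γ := Γ) x₀ (r + R)
  have hcover : ball x₀ r ⊆ ⋃ γ ∈ hfin.toFinset, closedBall (γ • x₀) R := by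
    intro y hy
    obtain ⟨γ, hγ⟩ := hR y
    refine mem_biUnion (hfin.mem_toFinset.2 (mem_displacementSet.2 ?_)) hγ
    linarith [dist_triangle x₀ y (γ • x₀), mem_ball'.1 hy]
  calc μ (ball x₀ r) ≤ ∑ γ ∈ hfin.toFinset, μ (closedBall (γ • x₀) R) :=
        (measure_mono hcover).trans (measure_biUnion_finset_le _ _)
    _ ≤ (displacementSet Γ x₀ (r + R)).ncard * L := by
        rw [ncard_eq_toFinset_card _ hfin, ← nsmul_eq_mul]
        exact Finset.sum_le_card_nsmul _ _ _ fun γ _ => hL γ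

open scoped Classical Finset in
theorem card_filter_mem_ball_smul_le [ProperSpace X] [ProperlyDiscontinuousSMul Γ X]
    [IsIsometricSMul Γ X] (s : Finset Γ) (x₀ x : X) (ρ : ℝ) :
    #{γ ∈ s | x ∈ ball (γ • x₀) ρ} ≤ (displacementSet Γ x₀ (2 * ρ)).ncard := by
  rcases Finset.eq_empty_or_nonempty {γ ∈ s | x ∈ ball (γ • x₀) ρ} with h | ⟨γ₁, hγ₁⟩
  · rw [h, Finset.card_empty]
    exact Nat.zero_le _
  rw [← ncard_coe_finset]
  refine ncard_le_ncard_of_injOn (γ₁⁻¹ * ·) (fun γ hγ => ?_) (mul_right_injective _).injOn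
    (finite_displacementSet x₀ _)
  have h₁ := mem_ball'.1 (Finset.mem_filter.1 hγ₁).2
  have h := mem_ball.1 (Finset.mem_filter.1 hγ).2
  rw [mem_displacementSet, mul_smul, ← dist_smul γ₁, smul_inv_smul]
  linarith [dist_triangle (γ₁ • x₀) x (γ • x₀)]

theorem mul_ncard_displacementSet_le [ProperSpace X] [ProperlyDiscontinuousSMul Γ X]
    [IsIsometricSMul Γ X] [MeasurableSpace X] [OpensMeasurableSpace X] (μ : Measure X)
    {x₀ : X} {ρ : ℝ} {c : ℝ≥0∞} (hc : ∀ γ : Γ, c ≤ μ (ball (γ • x₀) ρ)) (r : ℝ) :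
    c * (displacementSet Γ x₀ r).ncard ≤
      (displacementSet Γ x₀ (2 * ρ)).ncard * μ (ball x₀ (r + ρ)) := by
  have hfin := finite_displacementSet (Γ := Γ) x₀ r
  have hsub : ∀ γ ∈ hfin.toFinset, ball (γ • x₀) ρ ⊆ ball x₀ (r + ρ) := fun γ hγ =>
    ball_subset_ball' <| by
      rw [dist_comm]; linarith [mem_displacementSet.1 (hfin.mem_toFinset.1 hγ)]
  calc c * (displacementSet Γ x₀ r).ncard = ∑ _γ ∈ hfin.toFinset, c := by
        rw [Finset.sum_const, nsmul_eq_mul, ncard_eq_toFinset_card _ hfin, mul_comm]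
    _ ≤ ∑ γ ∈ hfin.toFinset, μ (ball (γ • x₀) ρ) := Finset.sum_le_sum fun γ _ => hc γ
    _ ≤ _ := sum_measure_le_mul_measure_of_forall_card_le μ (fun _ _ => measurableSet_ball) hsub
        fun x => card_filter_mem_ball_smul_le _ x₀ x ρ

end OrbitGrowth

/-- For a properly discontinuous, cocompact isometric action of a group `Γ` on a
proper metric space `X`, and a Borel measure `μ` whose unit balls have measure
uniformly bounded above and below by positive constants, the critical exponent of `Γ`
equals the volume growth exponent of `μ`:
`limsup_{r→∞} (1/r)·log #{γ : d(x₀, γ·x₀) ≤ r} = limsup_{r→∞} (1/r)·log μ(B(x₀, r))`. -/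
theorem critical_exponent_eq_volume_entropy
    {X : Type*} [MetricSpace X] [ProperSpace X]
    [MeasurableSpace X] [BorelSpace X]
    {Γ : Type*} [Group Γ] [MulAction Γ X]
    (hiso : ∀ γ : Γ, Isometry (fun x : X => γ • x))
    (hpd : ∀ K : Set X, IsCompact K → {γ : Γ | ((fun x => γ • x) '' K ∩ K).Nonempty}.Finite)
    (hcc : ∃ D : Set X, IsCompact D ∧ (⋃ γ : Γ, (fun x => γ • x) '' D) = Set.univ)
    (μ : Measure X) (c C : ℝ≥0∞) (hc : 0 < c) (hC : C ≠ ⊤)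
    (hball : ∀ x : X, c ≤ μ (Metric.ball x 1) ∧ μ (Metric.ball x 1) ≤ C)
    (x₀ : X) :
    Filter.limsup
        (fun r : ℝ => Real.log (Nat.card {γ : Γ // dist x₀ (γ • x₀) ≤ r}) / r)
        Filter.atTop =
      Filter.limsup
        (fun r : ℝ => Real.log ((μ (Metric.ball x₀ r)).toReal) / r)
        Filter.atTop := by
  have : IsIsometricSMul Γ X := ⟨hiso⟩
  have : ProperlyDiscontinuousSMul Γ X := .of_finite_image_inter_self hpd
  obtain ⟨D, hD, hDcov⟩ := hcc
  obtain ⟨R, hR⟩ := exists_forall_exists_dist_smul_le (Γ := Γ) hD.isBounded hDcov x₀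
  obtain ⟨n, hn⟩ :=
    exists_forall_measure_closedBall_smul_le (Γ := Γ) μ (fun x => (hball x).2) x₀ R
  set N : ℝ → ℝ≥0∞ := fun r => (displacementSet Γ x₀ r).ncard with hN
  have hc_ne_top : c ≠ ∞ := ((hball x₀).1.trans_lt ((hball x₀).2.trans_lt hC.lt_top)).ne
  have hVN : ∀ r, μ (ball x₀ r) ≤ n * C * N (r + R) := fun r => by
    rw [mul_comm]; exact measure_ball_le_ncard_displacementSet_mul μ hR hn r
  have hNV : ∀ r, N r ≤ N (2 * 1) / c * μ (ball x₀ (r + 1)) := fun r => by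
    rw [← ENNReal.mul_div_right_comm, ENNReal.le_div_iff_mul_le (.inl hc.ne') (.inl hc_ne_top),
      mul_comm (N r)]
    exact mul_ncard_displacementSet_le μ (fun γ : Γ => (hball (γ • x₀)).1) r
  have hN_pos : ∀ᶠ r in atTop, N r ≠ 0 ∧ N r ≠ ∞ := by
    filter_upwards [eventually_ge_atTop 0] with r hr
    exact ⟨Nat.cast_ne_zero.2 ((ncard_pos (finite_displacementSet x₀ r)).2
      ⟨1, one_mem_displacementSet hr⟩).ne', natCast_ne_top _⟩
  have hV_pos : ∀ᶠ r in atTop, μ (ball x₀ r) ≠ 0 ∧ μ (ball x₀ r) ≠ ∞ := by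
    filter_upwards [eventually_ge_atTop 1] with r hr
    exact ⟨(hc.trans_le ((hball x₀).1.trans (measure_mono (ball_subset_ball hr)))).ne',
      ne_top_of_le_ne_top (by finiteness) (hVN r)⟩
  have key := limsup_log_toReal_div_eq_of_le_mul hN_pos hV_pos
    (div_ne_top (natCast_ne_top _) hc.ne') (by finiteness) (.of_forall hNV) (.of_forall hVN)
  simp only [hN, toReal_natCast, ← Nat.card_coe_set_eq] at key
  exact key
end
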